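/- For all a, b, c in B_∞, the shifted conjugacy operation a*b = a·d(b)·σ₁·d(a)⁻¹ satisfies: if s*p = p', then for any r, (r*s)*(r*p) = r*p'. (Soundness of the b=1 response in Dehornoy's protocol, specialized to B_∞.) -/
import Mathlib


/-- Braid relations for the infinite braid group: generator `i : ℕ` represents σ_{i+1}. -/
def braidRelsInf : Set (FreeGroup ℕ) :=
  {r | ∃ i j : ℕ,
    (j = i + 1 ∧ r = FreeGroup.of i * FreeGroup.of j * FreeGroup.of i *
        (FreeGroup.of j * FreeGroup.of i * FreeGroup.of j)⁻¹) ∨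
    (i + 2 ≤ j ∧ r = FreeGroup.of i * FreeGroup.of j * (FreeGroup.of j * FreeGroup.of i)⁻¹)}

/-- The braid group B_∞ on infinitely many strands. -/
abbrev BInf : Type := PresentedGroup braidRelsInf

/-- `sigmaInf i` is the Artin generator σ_{i+1} of `BInf` (0-indexed). -/
def sigmaInf (i : ℕ) : BInf := PresentedGroup.of i

/-- Braid relations on `n` generators: `B n` below is the braid group B_{n+1} on
n+1 strands; the generator `i : Fin n` represents σ_{i+1}. -/
def braidRels (n : ℕ) : Set (FreeGroup (Fin n)) :=
  {r | ∃ i j : Fin n,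
    ((j : ℕ) = (i : ℕ) + 1 ∧ r = FreeGroup.of i * FreeGroup.of j * FreeGroup.of i *
        (FreeGroup.of j * FreeGroup.of i * FreeGroup.of j)⁻¹) ∨
    ((i : ℕ) + 2 ≤ (j : ℕ) ∧ r = FreeGroup.of i * FreeGroup.of j *
        (FreeGroup.of j * FreeGroup.of i)⁻¹)}

/-- `B n` is the braid group on n+1 strands (the paper's B_{n+1}), with n generators. -/
abbrev B (n : ℕ) : Type := PresentedGroup (braidRels n)

/-- `σ i` for `i : Fin n` is the Artin generator σ_{i+1} of `B n` (0-indexed). -/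
def σ {n : ℕ} (i : Fin n) : B n := PresentedGroup.of i

/-- `delta n = σ_n ⋯ σ_1` (the paper's δ_{n+1} when `B n` is the paper's B_{n+1}). -/
def delta (n : ℕ) : B n := ((List.ofFn (fun i : Fin n => σ i)).reverse).prod

/-- `Delta n = (σ_n ⋯ σ_1)(σ_n ⋯ σ_2) ⋯ (σ_n)`, the paper's Δ_{n+1}. -/
def Delta (n : ℕ) : B n :=
  (List.ofFn (fun k : Fin n =>
    (((List.ofFn (fun i : Fin n => σ i)).reverse).take (n - (k : ℕ))).prod)).prod




lemma braidRelsInf_rel_one {r : FreeGroup ℕ} (hr : r ∈ braidRelsInf) :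
    (QuotientGroup.mk r : BInf) = 1 :=
  (QuotientGroup.eq_one_iff r).mpr (Subgroup.subset_normalClosure hr)

lemma sigmaInf_braid_adj (i : ℕ) :
    sigmaInf i * sigmaInf (i+1) * sigmaInf i = sigmaInf (i+1) * sigmaInf i * sigmaInf (i+1) := by
  have h := braidRelsInf_rel_one (r := FreeGroup.of i * FreeGroup.of (i+1) * FreeGroup.of i *
      (FreeGroup.of (i+1) * FreeGroup.of i * FreeGroup.of (i+1))⁻¹) ⟨i, i+1, Or.inl ⟨rfl, rfl⟩⟩
  have heq : (QuotientGroup.mk (FreeGroup.of i * FreeGroup.of (i+1) * FreeGroup.of i *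
      (FreeGroup.of (i+1) * FreeGroup.of i * FreeGroup.of (i+1))⁻¹) : BInf)
      = sigmaInf i * sigmaInf (i+1) * sigmaInf i *
        (sigmaInf (i+1) * sigmaInf i * sigmaInf (i+1))⁻¹ := rfl
  rw [heq] at h
  group at h ⊢
  exact mul_inv_eq_one.mp h

lemma sigmaInf_braid_comm {i j : ℕ} (hij : i + 2 ≤ j) :
    Commute (sigmaInf i) (sigmaInf j) := by
  have h := braidRelsInf_rel_one (r := FreeGroup.of i * FreeGroup.of j *
      (FreeGroup.of j * FreeGroup.of i)⁻¹) ⟨i, j, Or.inr ⟨hij, rfl⟩⟩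
  have heq : (QuotientGroup.mk (FreeGroup.of i * FreeGroup.of j *
      (FreeGroup.of j * FreeGroup.of i)⁻¹) : BInf)
      = sigmaInf i * sigmaInf j * (sigmaInf j * sigmaInf i)⁻¹ := rfl
  rw [heq] at h
  exact mul_inv_eq_one.mp h

/-- σ₁ commutes with everything in the image of the double shift d². -/
lemma sigmaInf_comm_dd (d : BInf →* BInf) (hd : ∀ i : ℕ, d (sigmaInf i) = sigmaInf (i + 1))
    (x : BInf) : Commute (sigmaInf 0) (d (d x)) := by
  have hx : x ∈ Subgroup.closure (Set.range (PresentedGroup.of (rels := braidRelsInf))) := by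
    rw [PresentedGroup.closure_range_of]; trivial
  induction hx using Subgroup.closure_induction with
  | mem y hy =>
    obtain ⟨i, rfl⟩ := hy
    have hgen : d (d (PresentedGroup.of i)) = sigmaInf (i + 2) := by
      show d (d (sigmaInf i)) = _
      rw [hd, hd]
    rw [hgen]
    exact sigmaInf_braid_comm (by omega)
  | one => simp
  | mul a b _ _ ha hb => rw [map_mul, map_mul]; exact ha.mul_right hb
  | inv a _ ha => rw [map_inv, map_inv]; exact ha.inv_right

/-- Abstract group computation underlying self-distributivity of shifted conjugacy. -/
lemma sstar_key {G : Type*} [Group G] (τ τ' s₁ s₂ p₂ r r₁ r₂ : G)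
    (h1 : Commute τ p₂) (h2 : Commute τ r₂) (h3 : Commute τ s₂)
    (hb : τ * τ' * τ = τ' * τ * τ') :
    (r * s₁ * τ * r₁⁻¹) * (r₁ * p₂ * τ' * r₂⁻¹) * τ * (r₁ * s₂ * τ' * r₂⁻¹)⁻¹
      = r * (s₁ * p₂ * τ' * s₂⁻¹) * τ * r₁⁻¹ := by
  have e2 : r₂⁻¹ * τ * r₂ = τ := by rw [mul_assoc, h2.eq, ← mul_assoc]; group
  calc (r * s₁ * τ * r₁⁻¹) * (r₁ * p₂ * τ' * r₂⁻¹) * τ * (r₁ * s₂ * τ' * r₂⁻¹)⁻¹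
      = r * s₁ * (τ * p₂) * τ' * (r₂⁻¹ * τ * r₂) * τ'⁻¹ * s₂⁻¹ * r₁⁻¹ := by group
    _ = r * s₁ * (p₂ * τ) * τ' * τ * τ'⁻¹ * s₂⁻¹ * r₁⁻¹ := by rw [e2, h1.eq]
    _ = r * s₁ * p₂ * (τ * τ' * τ) * τ'⁻¹ * s₂⁻¹ * r₁⁻¹ := by group
    _ = r * s₁ * p₂ * (τ' * τ * τ') * τ'⁻¹ * s₂⁻¹ * r₁⁻¹ := by rw [hb]
    _ = r * s₁ * p₂ * τ' * (τ * s₂⁻¹) * r₁⁻¹ := by group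
    _ = r * s₁ * p₂ * τ' * (s₂⁻¹ * τ) * r₁⁻¹ := by rw [h3.inv_right.eq]
    _ = r * (s₁ * p₂ * τ' * s₂⁻¹) * τ * r₁⁻¹ := by group

/-- Shifted conjugacy on B_∞: `a*b = a · d(b) · σ₁ · d(a)⁻¹` (σ₁ is `sigmaInf 0`). -/
def sstar (d : BInf →* BInf) (a b : BInf) : BInf := a * d b * sigmaInf 0 * (d a)⁻¹

/-- soundness of the b=1 response: in B_∞ with shifted conjugacy,
if s*p = p' then (r*s)*(r*p) = r*p' for any r. -/
theorem protocol_soundness_binf (d : BInf →* BInf)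
    (hd : ∀ i : ℕ, d (sigmaInf i) = sigmaInf (i + 1))
    (s p p' r : BInf) (h : sstar d s p = p') :
    sstar d (sstar d r s) (sstar d r p) = sstar d r p' := by
  subst h
  have hb : sigmaInf 0 * sigmaInf 1 * sigmaInf 0 = sigmaInf 1 * sigmaInf 0 * sigmaInf 1 :=
    sigmaInf_braid_adj 0
  simp only [sstar, map_mul, map_inv, hd 0]
  exact sstar_key (sigmaInf 0) (sigmaInf 1) (d s) (d (d s)) (d (d p)) r (d r) (d (d r))
    (sigmaInf_comm_dd d hd p) (sigmaInf_comm_dd d hd r) (sigmaInf_comm_dd d hd s) hb
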